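/- arXiv:1701.04521 — 3 statements merged into one kernel-verified Lean document; each statement's English description precedes it below -/
import Mathlib

section
/- Let S be a set of variables with |S| ≤ ζ·SMALL in a factor graph satisfying the Plausibility Assumption. Then cl(S ∪ vbls(cl(S))) = cl(S); that is, taking the closure of S, adjoining all variables appearing in cl(S), and re-closing does not enlarge the closure. -/
open scoped Classical
open Finset

namespace CSP

variable {Cn Vr : Type*} [Fintype Cn] [Fintype Vr] [DecidableEq Cn] [DecidableEq Vr]

/-- Constraint-vertices of an edge-induced subgraph (given as a set of edges). -/
def consOf (H : Finset (Cn × Vr)) : Finset Cn := H.image Prod.fst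

/-- Variable-vertices of an edge-induced subgraph. -/
def vbls (H : Finset (Cn × Vr)) : Finset Vr := H.image Prod.snd

/-- Degree of a constraint-vertex within `H`. -/
def degC (H : Finset (Cn × Vr)) (f : Cn) : ℕ := (H.filter fun e => e.1 = f).card

/-- Degree of a variable-vertex within `H`. -/
def degV (H : Finset (Cn × Vr)) (v : Vr) : ℕ := (H.filter fun e => e.2 = v).card

/-- Leaf variable-vertices: those of degree exactly 1. -/
def leaves (H : Finset (Cn × Vr)) : Finset Vr := (vbls H).filter fun v => degV H v = 1

/-- Revenue: one credit per leaf variable-vertex, minus a debit for each excess edge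
(edges beyond 2 at a variable-vertex, beyond `τ` at a constraint-vertex). -/
def revenue (τ : ℕ) (H : Finset (Cn × Vr)) : ℝ :=
  ((leaves H).card : ℝ)
    - (((∑ v ∈ vbls H, (degV H v - 2)) + ∑ f ∈ consOf H, (degC H f - τ) : ℕ) : ℝ)

/-- A `τ`-subgraph: every constraint-vertex has degree at least `τ`. -/
def IsTau (τ : ℕ) (H : Finset (Cn × Vr)) : Prop := ∀ f ∈ consOf H, τ ≤ degC H f

/-- Plausibility: income `R(H) - ζ·|consOf H|` is nonnegative. -/
def Plausible (τ : ℕ) (ζ : ℝ) (H : Finset (Cn × Vr)) : Prop :=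
  ζ * ((consOf H).card : ℝ) ≤ revenue τ H

/-- The Plausibility Assumption for a factor graph with edge set `E`. -/
def PlausibilityAssumption (τ : ℕ) (ζ : ℝ) (SMALL : ℕ) (E : Finset (Cn × Vr)) : Prop :=
  ∀ H ⊆ E, IsTau τ H → (consOf H).card ≤ 2 * SMALL → Plausible τ ζ H

/-- `S`-closed: a `τ`-subgraph all of whose leaf variable-vertices lie in `S`. -/
def SClosed (τ : ℕ) (S : Finset Vr) (H : Finset (Cn × Vr)) : Prop :=
  IsTau τ H ∧ leaves H ⊆ S

/-- The closure of `S`: the union of all small `S`-closed `τ`-subgraphs of `E`. -/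
noncomputable def closure (τ SMALL : ℕ) (E : Finset (Cn × Vr)) (S : Finset Vr) :
    Finset (Cn × Vr) :=
  (E.powerset.filter fun H => SClosed τ S H ∧ (consOf H).card ≤ SMALL).sup id

end CSP

open CSP

namespace CSP

section Aux

variable {Cn Vr : Type*} [Fintype Cn] [Fintype Vr] [DecidableEq Cn] [DecidableEq Vr]

lemma degC_mono {H K : Finset (Cn × Vr)} (h : H ⊆ K) (f : Cn) : degC H f ≤ degC K f :=
  Finset.card_le_card (Finset.filter_subset_filter _ h)

lemma degV_mono {H K : Finset (Cn × Vr)} (h : H ⊆ K) (v : Vr) : degV H v ≤ degV K v :=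
  Finset.card_le_card (Finset.filter_subset_filter _ h)

lemma mem_vbls_iff {H : Finset (Cn × Vr)} {v : Vr} : v ∈ vbls H ↔ 0 < degV H v := by
  simp only [vbls, degV, Finset.card_pos, Finset.mem_image,
    Finset.filter_nonempty_iff]

lemma consOf_union (H K : Finset (Cn × Vr)) : consOf (H ∪ K) = consOf H ∪ consOf K :=
  Finset.image_union _ _

lemma vbls_union (H K : Finset (Cn × Vr)) : vbls (H ∪ K) = vbls H ∪ vbls K :=
  Finset.image_union _ _

lemma isTau_union {τ : ℕ} {H K : Finset (Cn × Vr)} (hH : IsTau τ H) (hK : IsTau τ K) :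
    IsTau τ (H ∪ K) := by
  intro f hf
  rw [consOf_union] at hf
  rcases Finset.mem_union.mp hf with h | h
  · exact le_trans (hH f h) (degC_mono Finset.subset_union_left f)
  · exact le_trans (hK f h) (degC_mono Finset.subset_union_right f)

lemma leaf_of_union_left {H K : Finset (Cn × Vr)} {v : Vr}
    (hv : v ∈ leaves (H ∪ K)) (hvH : v ∈ vbls H) : v ∈ leaves H := by
  obtain ⟨_, hv1⟩ := Finset.mem_filter.mp hv
  have h1 : 0 < degV H v := mem_vbls_iff.mp hvH
  have h2 : degV H v ≤ 1 := hv1 ▸ degV_mono Finset.subset_union_left v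
  exact Finset.mem_filter.mpr ⟨hvH, le_antisymm h2 h1⟩

lemma leaf_of_union_right {H K : Finset (Cn × Vr)} {v : Vr}
    (hv : v ∈ leaves (H ∪ K)) (hvK : v ∈ vbls K) : v ∈ leaves K := by
  obtain ⟨_, hv1⟩ := Finset.mem_filter.mp hv
  have h1 : 0 < degV K v := mem_vbls_iff.mp hvK
  have h2 : degV K v ≤ 1 := hv1 ▸ degV_mono Finset.subset_union_right v
  exact Finset.mem_filter.mpr ⟨hvK, le_antisymm h2 h1⟩

lemma sclosed_union {τ : ℕ} {S : Finset Vr} {H K : Finset (Cn × Vr)}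
    (hH : SClosed τ S H) (hK : SClosed τ S K) : SClosed τ S (H ∪ K) := by
  refine ⟨isTau_union hH.1 hK.1, fun v hv => ?_⟩
  have hvm : v ∈ vbls (H ∪ K) := (Finset.mem_filter.mp hv).1
  rw [vbls_union] at hvm
  rcases Finset.mem_union.mp hvm with h | h
  · exact hH.2 (leaf_of_union_left hv h)
  · exact hK.2 (leaf_of_union_right hv h)

lemma revenue_le_leaves (τ : ℕ) (H : Finset (Cn × Vr)) :
    revenue τ H ≤ ((leaves H).card : ℝ) := by
  unfold revenue
  have : (0 : ℝ) ≤ (((∑ v ∈ vbls H, (degV H v - 2)) + ∑ f ∈ consOf H, (degC H f - τ) : ℕ) : ℝ) :=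
    Nat.cast_nonneg _
  linarith

lemma small_of_sclosed (τ SMALL : ℕ) (ζ : ℝ) (hζ0 : 0 < ζ) (E : Finset (Cn × Vr))
    (hPA : PlausibilityAssumption τ ζ SMALL E) (S : Finset Vr)
    (hS : (S.card : ℝ) ≤ ζ * SMALL)
    {K : Finset (Cn × Vr)} (hKE : K ⊆ E) (hK : SClosed τ S K)
    (h2 : (consOf K).card ≤ 2 * SMALL) : (consOf K).card ≤ SMALL := by
  have hrev := hPA K hKE hK.1 h2
  have hl : ((leaves K).card : ℝ) ≤ (S.card : ℝ) :=
    Nat.cast_le.mpr (Finset.card_le_card hK.2)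
  have hfin : ζ * ((consOf K).card : ℝ) ≤ ζ * (SMALL : ℝ) :=
    le_trans hrev (le_trans (revenue_le_leaves τ K) (le_trans hl hS))
  exact_mod_cast (mul_le_mul_iff_right₀ hζ0).mp hfin

lemma closure_spec (τ SMALL : ℕ) (ζ : ℝ) (hζ0 : 0 < ζ) (E : Finset (Cn × Vr))
    (hPA : PlausibilityAssumption τ ζ SMALL E) (S : Finset Vr)
    (hS : (S.card : ℝ) ≤ ζ * SMALL) :
    closure τ SMALL E S ⊆ E ∧ SClosed τ S (closure τ SMALL E S) ∧
      (consOf (closure τ SMALL E S)).card ≤ SMALL := by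
  unfold closure
  refine Finset.sup_induction (p := fun X => X ⊆ E ∧ SClosed τ S X ∧ (consOf X).card ≤ SMALL) ?_ ?_ ?_
  · refine ⟨Finset.empty_subset E, ⟨fun f hf => ?_, ?_⟩, ?_⟩
    · simp [consOf] at hf
    · simp [leaves, vbls]
    · simp [consOf]
  · rintro a ⟨haE, haS, haC⟩ b ⟨hbE, hbS, hbC⟩
    have hab : (a ⊔ b : Finset (Cn × Vr)) = a ∪ b := rfl
    rw [hab]
    have hUE : a ∪ b ⊆ E := Finset.union_subset haE hbE
    have hUS : SClosed τ S (a ∪ b) := sclosed_union haS hbS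
    have h2 : (consOf (a ∪ b)).card ≤ 2 * SMALL := by
      rw [consOf_union]
      calc (consOf a ∪ consOf b).card ≤ (consOf a).card + (consOf b).card :=
            Finset.card_union_le _ _
        _ ≤ SMALL + SMALL := Nat.add_le_add haC hbC
        _ = 2 * SMALL := (two_mul SMALL).symm
    exact ⟨hUE, hUS, small_of_sclosed τ SMALL ζ hζ0 E hPA S hS hUE hUS h2⟩
  · intro H hH
    simp only [Finset.mem_filter, Finset.mem_powerset] at hH
    exact ⟨hH.1, hH.2.1, hH.2.2⟩

lemma closure_mono (τ SMALL : ℕ) (E : Finset (Cn × Vr)) {S T : Finset Vr} (hST : S ⊆ T) :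
    closure τ SMALL E S ⊆ closure τ SMALL E T := by
  unfold closure
  rw [← Finset.le_iff_subset]
  refine Finset.sup_le fun H hH => Finset.le_sup (f := id) ?_
  simp only [Finset.mem_filter, Finset.mem_powerset] at hH ⊢
  exact ⟨hH.1, ⟨hH.2.1.1, hH.2.1.2.trans hST⟩, hH.2.2⟩

end Aux

end CSP

/-- Re-closing after adjoining the variables of the closure does not enlarge the closure:
`cl(S ∪ vbls(cl S)) = cl S`, for `|S| ≤ ζ·SMALL` under the Plausibility Assumption. -/
theorem stmt_5 {Cn Vr : Type*} [Fintype Cn] [Fintype Vr] [DecidableEq Cn] [DecidableEq Vr]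
    (τ SMALL : ℕ) (hτ : 3 ≤ τ) (hSMALL : 1 ≤ SMALL)
    (ζ : ℝ) (hζ0 : 0 < ζ) (hζ1 : ζ < 1)
    (E : Finset (Cn × Vr)) (hPA : PlausibilityAssumption τ ζ SMALL E)
    (S : Finset Vr) (hS : (S.card : ℝ) ≤ ζ * SMALL) :
    closure τ SMALL E (S ∪ vbls (closure τ SMALL E S)) = closure τ SMALL E S := by
  obtain ⟨hCE, hCS, hCc⟩ := closure_spec τ SMALL ζ hζ0 E hPA S hS
  set C := closure τ SMALL E S with hC
  apply Finset.Subset.antisymm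
  · rw [← Finset.le_iff_subset]
    refine Finset.sup_le fun H hH => ?_
    simp only [Finset.mem_filter, Finset.mem_powerset] at hH
    obtain ⟨hHE, ⟨hHTau, hHleaves⟩, hHc⟩ := hH
    have hKE : H ∪ C ⊆ E := Finset.union_subset hHE hCE
    have hKS : SClosed τ S (H ∪ C) := by
      refine ⟨isTau_union hHTau hCS.1, fun v hv => ?_⟩
      have hvm : v ∈ vbls (H ∪ C) := (Finset.mem_filter.mp hv).1
      by_cases hvc : v ∈ vbls C
      · exact hCS.2 (leaf_of_union_right hv hvc)
      · have hvH : v ∈ vbls H := by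
          rw [vbls_union] at hvm
          rcases Finset.mem_union.mp hvm with h | h
          · exact h
          · exact absurd h hvc
        have hlf : v ∈ leaves H := leaf_of_union_left hv hvH
        rcases Finset.mem_union.mp (hHleaves hlf) with h | h
        · exact h
        · exact absurd h hvc
    have h2c : (consOf (H ∪ C)).card ≤ 2 * SMALL := by
      rw [consOf_union]
      calc (consOf H ∪ consOf C).card ≤ (consOf H).card + (consOf C).card :=
            Finset.card_union_le _ _
        _ ≤ SMALL + SMALL := Nat.add_le_add hHc hCc
        _ = 2 * SMALL := (two_mul SMALL).symm
    have hKsmall := small_of_sclosed τ SMALL ζ hζ0 E hPA S hS hKE hKS h2c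
    have hKle : H ∪ C ⊆ C := by
      rw [hC]
      exact Finset.le_sup (f := id)
        (Finset.mem_filter.mpr ⟨Finset.mem_powerset.mpr hKE, hKS, hKsmall⟩)
    exact fun e he => hKle (Finset.mem_union_left _ he)
  · exact closure_mono τ SMALL E Finset.subset_union_left
end

section
/- In the setting of the union-revenue lemma (H a τ-subgraph-plus with R(H) ≤ r and at most SMALL constraints; H' a τ-subgraph with at most SMALL constraints and at most s leaves not in H; r + s ≤ ζ·SMALL; Plausibility Assumption holds), suppose additionally that H' has b edges each having exactly one endpoint in H (boundary edges). Then R(H ∪ H') ≤ r + s − b. -/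
open scoped Classical
open Finset

open CSP

/-- Revenue of a τ-subgraph-plus: the τ-subgraph `H` together with a set `W` of isolated
variable-vertices, each isolated vertex contributing 2 credits. -/
noncomputable def revenuePlus {Cn Vr : Type*} [Fintype Cn] [Fintype Vr]
    [DecidableEq Cn] [DecidableEq Vr] (τ : ℕ) (H : Finset (Cn × Vr)) (W : Finset Vr) : ℝ :=
  revenue τ H + 2 * (W.card : ℝ)

/-!
Every variable-vertex of degree `d` earns exactly `2 - d` credits (an isolated one 2, a leaf 1,
one of degree `d ≥ 2` pays `d - 2` debits), so `R⁺(H, W) = 2 * #(vbls H ∪ W) - #H - excess`,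
where the excess is counted at constraint-vertices only. Going from `H` to `H ∪ H'`, every new
edge costs one credit through `-#H`, while a new variable-vertex earns `2 ≤ deg + [leaf]`, i.e.
it is paid for by its own new edges plus one credit if it is a leaf. What remains are the new
edges with an old endpoint: at an old variable-vertex nothing pays for them, and at an old
constraint-vertex, already of degree `≥ τ`, they are excess edges. Each boundary edge is of one
of these two kinds.
-/

namespace CSP

variable {Cn Vr : Type*}

section Degrees

variable {H U : Finset (Cn × Vr)}

lemma mem_vbls_iff_degV_pos [DecidableEq Vr] {v : Vr} : v ∈ vbls H ↔ 0 < degV H v := by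
  simp only [vbls, degV, card_pos, filter_nonempty_iff, mem_image]

lemma mem_leaves_iff [DecidableEq Vr] {v : Vr} : v ∈ leaves H ↔ degV H v = 1 := by
  rw [leaves, mem_filter, mem_vbls_iff_degV_pos]
  omega

lemma degV_union_of_notMem [DecidableEq Cn] [DecidableEq Vr] {v : Vr} (hv : v ∉ vbls H)
    (H' : Finset (Cn × Vr)) : degV (H ∪ H') v = degV H' v := by
  rw [mem_vbls_iff_degV_pos, Nat.pos_iff_ne_zero, not_not] at hv
  have hle : degV (H ∪ H') v ≤ degV H v + degV H' v := by
    rw [degV, degV, degV, filter_union]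
    exact card_union_le _ _
  have hge : degV H' v ≤ degV (H ∪ H') v :=
    card_le_card (filter_subset_filter _ subset_union_right)
  omega

lemma degC_eq_degC_add_degC_sdiff [DecidableEq Cn] [DecidableEq Vr] (hHU : H ⊆ U) (f : Cn) :
    degC U f = degC H f + degC (U \ H) f := by
  conv_lhs => rw [← union_sdiff_of_subset hHU]
  rw [degC, filter_union, card_union_of_disjoint (disjoint_filter_filter disjoint_sdiff)]
  rfl

lemma sum_degV_eq_card_filter [DecidableEq Vr] (H : Finset (Cn × Vr)) (S : Finset Vr) :
    ∑ v ∈ S, degV H v = #(H.filter fun e => e.2 ∈ S) :=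
  sum_card_fiberwise_eq_card_filter H S Prod.snd

lemma sum_degC_eq_card_filter [DecidableEq Cn] (H : Finset (Cn × Vr)) (S : Finset Cn) :
    ∑ f ∈ S, degC H f = #(H.filter fun e => e.1 ∈ S) :=
  sum_card_fiberwise_eq_card_filter H S Prod.fst

lemma sum_degV_vbls [DecidableEq Vr] (H : Finset (Cn × Vr)) : ∑ v ∈ vbls H, degV H v = #H := by
  rw [sum_degV_eq_card_filter, filter_true_of_mem]
  exact fun e he => mem_image_of_mem Prod.snd he

lemma leaves_union_sdiff_subset [DecidableEq Cn] [DecidableEq Vr] (H' : Finset (Cn × Vr))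
    {X : Finset Vr} (hX : vbls H ⊆ X) : leaves (H ∪ H') \ X ⊆ leaves H' \ X := by
  intro v hv
  obtain ⟨hleaf, hvX⟩ := mem_sdiff.1 hv
  rw [mem_leaves_iff, degV_union_of_notMem (fun hvH => hvX (hX hvH))] at hleaf
  exact mem_sdiff.2 ⟨mem_leaves_iff.2 hleaf, hvX⟩

theorem two_mul_card_vbls_sdiff_le [DecidableEq Vr] (U : Finset (Cn × Vr)) (X : Finset Vr) :
    2 * #(vbls U \ X) ≤ #(leaves U \ X) + #(U.filter fun e => e.2 ∉ X) := by
  have hleaves : leaves U \ X = (vbls U \ X).filter fun v => degV U v = 1 := by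
    ext v
    simp only [mem_sdiff, mem_filter, mem_leaves_iff, mem_vbls_iff_degV_pos]
    constructor
    · rintro ⟨hdeg, hvX⟩
      exact ⟨⟨by omega, hvX⟩, hdeg⟩
    · rintro ⟨⟨-, hvX⟩, hdeg⟩
      exact ⟨hdeg, hvX⟩
  have hedges : (U.filter fun e => e.2 ∉ X) = U.filter fun e => e.2 ∈ vbls U \ X :=
    filter_congr fun e he => by simp [mem_image_of_mem Prod.snd he, vbls]
  rw [hleaves, hedges, card_filter, ← sum_degV_eq_card_filter, ← sum_add_distrib,
    card_eq_sum_ones, mul_sum]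
  refine sum_le_sum fun v hv => ?_
  have := mem_vbls_iff_degV_pos.1 (mem_sdiff.1 hv).1
  split_ifs <;> omega

end Degrees

section Revenue

variable [DecidableEq Cn] [DecidableEq Vr]

def conExcess (τ : ℕ) (H : Finset (Cn × Vr)) : ℕ := ∑ f ∈ consOf H, (degC H f - τ)

theorem revenue_eq (τ : ℕ) (H : Finset (Cn × Vr)) :
    revenue τ H = 2 * #(vbls H) - #H - conExcess τ H := by
  have hvar : (#(leaves H) : ℤ) - ∑ v ∈ vbls H, ((degV H v - 2 : ℕ) : ℤ)
      = ∑ v ∈ vbls H, (2 - (degV H v : ℤ)) := by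
    rw [leaves, card_filter, Nat.cast_sum, ← sum_sub_distrib]
    refine sum_congr rfl fun v hv => ?_
    have := mem_vbls_iff_degV_pos.1 hv
    split_ifs <;> push_cast <;> omega
  have hsum : ∑ v ∈ vbls H, (2 - (degV H v : ℤ)) = 2 * #(vbls H) - #H := by
    rw [sum_sub_distrib, sum_const, ← Nat.cast_sum, sum_degV_vbls, nsmul_eq_mul, mul_comm]
  have hℤ := congrArg (Int.cast : ℤ → ℝ) (hvar.trans hsum)
  rw [revenue, conExcess]
  push_cast at hℤ ⊢
  linarith

theorem revenuePlus_eq [Fintype Cn] [Fintype Vr] (τ : ℕ) {H : Finset (Cn × Vr)}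
    {W : Finset Vr} (hW : Disjoint W (vbls H)) :
    revenuePlus τ H W = 2 * #(vbls H ∪ W) - #H - conExcess τ H := by
  rw [revenuePlus, revenue_eq, union_comm, card_union_of_disjoint hW]
  push_cast
  ring

theorem conExcess_add_card_le {τ : ℕ} {H U : Finset (Cn × Vr)} (hHU : H ⊆ U)
    (hH : IsTau τ H) :
    conExcess τ H + #((U \ H).filter fun e => e.1 ∈ consOf H) ≤ conExcess τ U :=
  calc conExcess τ H + #((U \ H).filter fun e => e.1 ∈ consOf H)
      = ∑ f ∈ consOf H, (degC U f - τ) := by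
        rw [conExcess, ← sum_degC_eq_card_filter, ← sum_add_distrib]
        refine sum_congr rfl fun f hf => ?_
        have := hH f hf
        rw [degC_eq_degC_add_degC_sdiff hHU]
        omega
    _ ≤ conExcess τ U := sum_le_sum_of_subset (image_subset_image hHU)

theorem revenuePlus_add_card_filter_le [Fintype Cn] [Fintype Vr] {τ : ℕ}
    {H U : Finset (Cn × Vr)} {W : Finset Vr} (hHU : H ⊆ U) (hH : IsTau τ H)
    (hW : Disjoint W (vbls H)) :
    revenuePlus τ U (W \ vbls U) + #((U \ H).filter fun e => e.2 ∈ vbls H ∪ W)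
        + #((U \ H).filter fun e => e.1 ∈ consOf H)
      ≤ revenuePlus τ H W + #(leaves U \ (vbls H ∪ W)) := by
  set X := vbls H ∪ W
  have hvbls : vbls H ⊆ vbls U := image_subset_image hHU
  have hvblsU : #(vbls U \ X) + #X = #(vbls U ∪ W) := by
    rw [card_sdiff_add_card, ← union_assoc, union_eq_left.2 hvbls]
  have hedges : #(U.filter fun e => e.2 ∉ X) ≤ #((U \ H).filter fun e => e.2 ∉ X) :=
    card_le_card fun e he => by
      obtain ⟨heU, heX⟩ := mem_filter.1 he
      refine mem_filter.2 ⟨mem_sdiff.2 ⟨heU, fun heH => heX ?_⟩, heX⟩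
      exact mem_union_left W (mem_image_of_mem Prod.snd heH)
  have hsplit := card_filter_add_card_filter_not (s := U \ H) fun e => e.2 ∈ X
  have hcard := card_sdiff_add_card_eq_card hHU
  have hvar := two_mul_card_vbls_sdiff_le U X
  have hcon := conExcess_add_card_le hHU hH
  rw [revenuePlus_eq τ sdiff_disjoint, union_sdiff_self_eq_union, revenuePlus_eq τ hW, ← hvblsU,
    ← hcard]
  rify at hedges hsplit hvar hcon
  push_cast
  linarith

theorem card_filter_xor_le (H H' : Finset (Cn × Vr)) {X : Finset Vr} (hX : vbls H ⊆ X) :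
    #(H'.filter fun e => Xor' (e.1 ∈ consOf H) (e.2 ∈ X))
      ≤ #((H' \ H).filter fun e => e.2 ∈ X) + #((H' \ H).filter fun e => e.1 ∈ consOf H) := by
  refine (card_le_card fun e he => ?_).trans (card_union_le _ _)
  obtain ⟨heH', hxor⟩ := mem_filter.1 he
  have heH : e ∉ H := fun heH => by
    rcases hxor with ⟨-, h⟩ | ⟨-, h⟩
    exacts [h (hX (mem_image_of_mem Prod.snd heH)), h (mem_image_of_mem Prod.fst heH)]
  rcases hxor with ⟨hcon, -⟩ | ⟨hvar, -⟩
  · exact mem_union_right _ (mem_filter.2 ⟨mem_sdiff.2 ⟨heH', heH⟩, hcon⟩)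
  · exact mem_union_left _ (mem_filter.2 ⟨mem_sdiff.2 ⟨heH', heH⟩, hvar⟩)

end Revenue

end CSP

theorem stmt_8_general {Cn Vr : Type*} [Fintype Cn] [Fintype Vr] [DecidableEq Cn] [DecidableEq Vr]
    (τ : ℕ) (r : ℝ) (s b : ℕ) (H : Finset (Cn × Vr)) (W : Finset Vr)
    (hHtau : IsTau τ H) (hW : Disjoint W (vbls H)) (hHrev : revenuePlus τ H W ≤ r)
    (H' : Finset (Cn × Vr)) (hleaves : ((leaves H') \ (vbls H ∪ W)).card ≤ s)
    (hb : b = (H'.filter fun e => Xor' (e.1 ∈ consOf H) (e.2 ∈ vbls H ∪ W)).card) :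
    revenuePlus τ (H ∪ H') (W \ vbls (H ∪ H')) ≤ r + (s : ℝ) - (b : ℝ) := by
  have hunion := revenuePlus_add_card_filter_le (U := H ∪ H') subset_union_left hHtau hW
  rw [union_sdiff_left] at hunion
  have hboundary : b ≤ _ := hb ▸ card_filter_xor_le H H' subset_union_left
  have hnewLeaves := (card_le_card (leaves_union_sdiff_subset H' subset_union_left)).trans hleaves
  rify at hboundary hnewLeaves
  linarith

/-- Boundary-edge revenue loss: in the setting of the union-revenue lemma, if `H'` has `b`
edges with exactly one endpoint in the τ-subgraph-plus `(H, W)`, then the revenue of the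
union is at most `r + s − b`. -/
theorem stmt_8 {Cn Vr : Type*} [Fintype Cn] [Fintype Vr] [DecidableEq Cn] [DecidableEq Vr]
    (τ SMALL : ℕ) (hτ : 3 ≤ τ) (hSMALL : 1 ≤ SMALL)
    (ζ : ℝ) (hζ0 : 0 < ζ) (hζ1 : ζ < 1)
    (E : Finset (Cn × Vr)) (hPA : PlausibilityAssumption τ ζ SMALL E)
    (r : ℝ) (s b : ℕ)
    (H : Finset (Cn × Vr)) (W : Finset Vr)
    (hHE : H ⊆ E) (hHtau : IsTau τ H) (hW : Disjoint W (vbls H))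
    (hHsmall : (consOf H).card ≤ SMALL) (hHrev : revenuePlus τ H W ≤ r)
    (H' : Finset (Cn × Vr)) (hH'E : H' ⊆ E) (hH'tau : IsTau τ H')
    (hH'small : (consOf H').card ≤ SMALL)
    (hleaves : ((leaves H') \ (vbls H ∪ W)).card ≤ s)
    (hrs : r + (s : ℝ) ≤ ζ * SMALL)
    (hb : b = (H'.filter fun e => Xor' (e.1 ∈ consOf H) (e.2 ∈ vbls H ∪ W)).card) :
    revenuePlus τ (H ∪ H') (W \ vbls (H ∪ H')) ≤ r + (s : ℝ) - (b : ℝ) :=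
  stmt_8_general τ r s b H W hHtau hW hHrev H' hleaves hb
end

section
/- Let G be a factor graph satisfying the Plausibility Assumption with parameter ζ, and suppose f is a constraint-vertex with neighborhood S = N(f), |S| ≤ K, and let H_f be the subgraph induced by all edges incident to f (so R(H_f) = τ when deg(f) = τ and all neighbors are leaves). If there exists a small S-closed τ-subgraph H not contained in H_f, then H_f ∪ H is a nonempty τ-subgraph with at most 2·SMALL constraints, at least one leaf variable all of whose leaves are adjacent to f, and revenue R(H_f ∪ H) ≤ τ − 1. -/
open scoped Classical
open Finset

open CSP

/-! Adjoining `H` to the star `H_f` of `f` creates no leaf outside `S = N(f)`. If every `v ∈ S`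
stayed a leaf, the edges of `H` away from `f` would form a small τ-subgraph without leaves, which
plausibility forces to be empty, i.e. `H ⊆ H_f`. So some `v ∈ S` stops being a leaf, leaving at
most `|S| - 1` leaves, while `f` alone carries `|S| - τ` excess edges. -/

namespace CSP

variable {Cn Vr : Type*}

section Constraints

variable [DecidableEq Cn] {A B H : Finset (Cn × Vr)} {f : Cn}

theorem mem_consOf {g : Cn} : g ∈ consOf H ↔ ∃ e ∈ H, e.1 = g := mem_image

theorem consOf_mono (h : A ⊆ B) : consOf A ⊆ consOf B := image_subset_image h

theorem degC_mono_s18 (h : A ⊆ B) (g : Cn) : degC A g ≤ degC B g :=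
  card_le_card (filter_subset_filter _ h)

theorem IsTau.filter_fst {τ : ℕ} (hH : IsTau τ H) (p : Cn → Prop) [DecidablePred p] :
    IsTau τ (H.filter fun e => p e.1) := by
  intro g hg
  obtain ⟨e, he, rfl⟩ := mem_consOf.1 hg
  obtain ⟨heH, hpe⟩ := mem_filter.1 he
  have hfilter : ((H.filter fun e => p e.1).filter fun e' => e'.1 = e.1) =
      H.filter fun e' => e'.1 = e.1 := by
    ext e'
    simp only [mem_filter, and_assoc, and_congr_right_iff]
    exact fun _ => ⟨And.right, fun h => ⟨h ▸ hpe, h⟩⟩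
  rw [degC, hfilter]
  exact hH _ (mem_consOf.2 ⟨e, heH, rfl⟩)

theorem card_consOf_le_one (hA : ∀ e ∈ A, e.1 = f) : (consOf A).card ≤ 1 :=
  card_le_one.2 fun g hg g' hg' => by
    obtain ⟨e, he, rfl⟩ := mem_consOf.1 hg
    obtain ⟨e', he', rfl⟩ := mem_consOf.1 hg'
    rw [hA e he, hA e' he']

theorem degC_eq_card (hA : ∀ e ∈ A, e.1 = f) : degC A f = A.card := by
  rw [degC, filter_true_of_mem hA]

theorem isTau_of_forall_fst_eq {τ : ℕ} (hA : ∀ e ∈ A, e.1 = f) (hτ : τ ≤ A.card) : IsTau τ A := by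
  intro g hg
  obtain ⟨e, he, rfl⟩ := mem_consOf.1 hg
  rw [hA e he, degC_eq_card hA]
  exact hτ

end Constraints

section Variables

variable [DecidableEq Vr] {A B H : Finset (Cn × Vr)} {f : Cn}

theorem mem_vbls {v : Vr} : v ∈ vbls H ↔ ∃ e ∈ H, e.2 = v := mem_image

theorem degV_mono_s18 (h : A ⊆ B) (v : Vr) : degV A v ≤ degV B v :=
  card_le_card (filter_subset_filter _ h)

theorem degV_pos {v : Vr} (hv : v ∈ vbls H) : 0 < degV H v := by
  obtain ⟨e, he, rfl⟩ := mem_vbls.1 hv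
  exact card_pos.2 ⟨e, mem_filter.2 ⟨he, rfl⟩⟩

theorem card_vbls_eq_card (hA : ∀ e ∈ A, e.1 = f) : (vbls A).card = A.card :=
  card_image_of_injOn fun e he e' he' h => Prod.ext ((hA e he).trans (hA e' he').symm) h

end Variables

variable [DecidableEq Cn] [DecidableEq Vr]

section Basic

variable {A B H : Finset (Cn × Vr)}

theorem consOf_union_s18 : consOf (A ∪ B) = consOf A ∪ consOf B := image_union _ _

theorem IsTau.union {τ : ℕ} (hA : IsTau τ A) (hB : IsTau τ B) : IsTau τ (A ∪ B) := by
  intro g hg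
  rw [consOf_union_s18, mem_union] at hg
  rcases hg with hg | hg
  · exact (hA g hg).trans (degC_mono_s18 subset_union_left g)
  · exact (hB g hg).trans (degC_mono_s18 subset_union_right g)

theorem leaves_union_subset : leaves (A ∪ B) ⊆ vbls A ∪ leaves B := by
  intro v hv
  obtain ⟨hvAB, hdeg⟩ := mem_filter.1 hv
  by_cases hvA : v ∈ vbls A
  · exact mem_union_left _ hvA
  have hvB : v ∈ vbls B := by
    obtain ⟨e, he, rfl⟩ := mem_vbls.1 hvAB
    rcases mem_union.1 he with he | he
    · exact absurd (mem_vbls.2 ⟨e, he, rfl⟩) hvA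
    · exact mem_vbls.2 ⟨e, he, rfl⟩
  have := degV_mono_s18 (B := A ∪ B) subset_union_right v
  have := degV_pos hvB
  exact mem_union_right _ (mem_filter.2 ⟨hvB, by omega⟩)

theorem revenue_le_card_leaves_sub_excess (τ : ℕ) (H : Finset (Cn × Vr)) (g : Cn) :
    revenue τ H ≤ (leaves H).card - ((degC H g - τ : ℕ) : ℝ) := by
  have hexcess : degC H g - τ ≤ ∑ g' ∈ consOf H, (degC H g' - τ) := by
    by_cases hg : g ∈ consOf H
    · exact single_le_sum (f := fun g' => degC H g' - τ) (fun _ _ => Nat.zero_le _) hg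
    · have : degC H g = 0 := card_eq_zero.2 <| filter_eq_empty_iff.2 fun e he hge =>
        hg (mem_consOf.2 ⟨e, he, hge⟩)
      omega
  rw [revenue]
  gcongr
  exact_mod_cast hexcess.trans (Nat.le_add_left _ _)

theorem PlausibilityAssumption.eq_empty_of_leaves_eq_empty {τ SMALL : ℕ} {ζ : ℝ}
    {E : Finset (Cn × Vr)} (hPA : PlausibilityAssumption τ ζ SMALL E) (hζ : 0 < ζ)
    (hHE : H ⊆ E) (hH : IsTau τ H) (hcard : (consOf H).card ≤ 2 * SMALL)
    (hleaves : leaves H = ∅) : H = ∅ := by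
  by_contra hne
  obtain ⟨e, he⟩ := nonempty_iff_ne_empty.2 hne
  have hcons : (0 : ℝ) < (consOf H).card :=
    Nat.cast_pos.2 (card_pos.2 ⟨e.1, mem_consOf.2 ⟨e, he, rfl⟩⟩)
  have hrev := revenue_le_card_leaves_sub_excess τ H e.1
  rw [hleaves, card_empty, Nat.cast_zero] at hrev
  have hplaus : ζ * (consOf H).card ≤ revenue τ H := hPA H hHE hH hcard
  nlinarith [(Nat.cast_nonneg (degC H e.1 - τ) : (0 : ℝ) ≤ _)]

end Basic

/-! Here `A` is the star of `f` in a graph containing `H`: by `hA` and `hHA`, its edges are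
exactly the edges of that graph at `f`. -/

section Star

variable {A H : Finset (Cn × Vr)} {f : Cn}
  (hA : ∀ e ∈ A, e.1 = f) (hHA : ∀ e ∈ H, e.1 = f → e ∈ A)
include hA hHA

theorem degC_union_eq_card_vbls : degC (A ∪ H) f = (vbls A).card := by
  have : (A ∪ H).filter (fun e => e.1 = f) = A := by
    ext e
    simp only [mem_filter, mem_union]
    exact ⟨fun ⟨he, hef⟩ => he.elim id (hHA e · hef), fun he => ⟨Or.inl he, hA e he⟩⟩
  rw [degC, this, card_vbls_eq_card hA]

theorem revenue_union_le {τ : ℕ} {v₀ : Vr} (hv₀ : v₀ ∈ vbls A) (hv₀' : v₀ ∉ leaves (A ∪ H))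
    (hleaves : leaves (A ∪ H) ⊆ vbls A) : revenue τ (A ∪ H) ≤ τ - 1 := by
  have hcard : (leaves (A ∪ H)).card + 1 ≤ (vbls A).card :=
    card_lt_card (ssubset_iff_of_subset hleaves |>.2 ⟨v₀, hv₀, hv₀'⟩)
  have hrev := revenue_le_card_leaves_sub_excess τ (A ∪ H) f
  rw [degC_union_eq_card_vbls hA hHA] at hrev
  have hexcess : ((vbls A).card : ℝ) - τ ≤ (((vbls A).card - τ : ℕ) : ℝ) := by
    rw [sub_le_iff_le_add]
    exact_mod_cast le_tsub_add
  have : ((leaves (A ∪ H)).card : ℝ) + 1 ≤ (vbls A).card := by exact_mod_cast hcard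
  linarith

theorem leaves_filter_fst_ne_eq_empty (hH : leaves H ⊆ vbls A)
    (hstar : vbls A ⊆ leaves (A ∪ H)) : leaves (H.filter fun e => e.1 ≠ f) = ∅ := by
  set W := H.filter fun e => e.1 ≠ f
  refine eq_empty_of_forall_notMem fun v hv => ?_
  obtain ⟨hvW, hdegW⟩ := mem_filter.1 hv
  obtain ⟨w, hw, rfl⟩ := mem_vbls.1 hvW
  obtain ⟨hwH, hwf⟩ := mem_filter.1 hw
  by_cases hvA : w.2 ∈ vbls A
  · -- an edge of `A` and the edge `w` both meet `w.2`, so it is not a leaf of `A ∪ H`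
    obtain ⟨a, ha, hav⟩ := mem_vbls.1 hvA
    have htwo : 1 < degV (A ∪ H) w.2 := one_lt_card.2
      ⟨a, mem_filter.2 ⟨mem_union_left _ ha, hav⟩, w, mem_filter.2 ⟨mem_union_right _ hwH, rfl⟩,
        fun haw => hwf (haw ▸ hA a ha)⟩
    have := (mem_filter.1 (hstar hvA)).2
    omega
  · -- no edge at `w.2` meets `f`, so `w.2` would already be a leaf of `H`
    have hfilter : (W.filter fun e => e.2 = w.2) = H.filter fun e => e.2 = w.2 := by
      ext e
      simp only [W, mem_filter, and_assoc, and_congr_right_iff]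
      exact fun heH =>
        ⟨And.right, fun hev => ⟨fun hef => hvA (mem_vbls.2 ⟨e, hHA e heH hef, hev⟩), hev⟩⟩
    have hleaf : w.2 ∈ leaves H := mem_filter.2
      ⟨mem_vbls.2 ⟨w, hwH, rfl⟩, by rw [degV, ← hfilter]; exact hdegW⟩
    exact hvA (hH hleaf)

theorem subset_of_vbls_subset_leaves_union {τ SMALL : ℕ} {ζ : ℝ} {E : Finset (Cn × Vr)}
    (hPA : PlausibilityAssumption τ ζ SMALL E) (hζ : 0 < ζ) (hHE : H ⊆ E)
    (hH : SClosed τ (vbls A) H) (hcard : (consOf H).card ≤ 2 * SMALL)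
    (hstar : vbls A ⊆ leaves (A ∪ H)) : H ⊆ A := by
  have hWH : (H.filter fun e => e.1 ≠ f) ⊆ H := filter_subset _ _
  have hempty : (H.filter fun e => e.1 ≠ f) = ∅ :=
    hPA.eq_empty_of_leaves_eq_empty hζ (hWH.trans hHE) (hH.1.filter_fst (· ≠ f))
      ((card_le_card (consOf_mono hWH)).trans hcard)
      (leaves_filter_fst_ne_eq_empty hA hHA hH.2 hstar)
  intro e he
  by_contra heA
  have hmem : e ∈ H.filter fun e => e.1 ≠ f := mem_filter.2 ⟨he, fun hef => heA (hHA e he hef)⟩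
  rw [hempty] at hmem
  exact notMem_empty e hmem

end Star

end CSP

theorem stmt_18_general {Cn Vr : Type*} [DecidableEq Cn] [DecidableEq Vr]
    (τ SMALL : ℕ)
    (ζ : ℝ) (hζ0 : 0 < ζ)
    (E : Finset (Cn × Vr)) (hPA : PlausibilityAssumption τ ζ SMALL E)
    (f : Cn) (Hf : Finset (Cn × Vr)) (hHf : Hf = E.filter fun e => e.1 = f)
    (S : Finset Vr) (hSdef : S = vbls Hf)
    (hdeg : τ ≤ Hf.card)
    (H : Finset (Cn × Vr)) (hHE : H ⊆ E)
    (hHsmall : (consOf H).card ≤ SMALL) (hHclosed : SClosed τ S H)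
    (hHnot : ¬ H ⊆ Hf) :
    Hf ∪ H ≠ ∅ ∧ IsTau τ (Hf ∪ H) ∧ (consOf (Hf ∪ H)).card ≤ 2 * SMALL ∧
      (leaves (Hf ∪ H)).Nonempty ∧ leaves (Hf ∪ H) ⊆ S ∧
      revenue τ (Hf ∪ H) ≤ (τ : ℝ) - 1 := by
  subst hSdef
  have hA : ∀ e ∈ Hf, e.1 = f := by rw [hHf]; exact fun e he => (mem_filter.1 he).2
  have hHA : ∀ e ∈ H, e.1 = f → e ∈ Hf := by
    rw [hHf]; exact fun e he hef => mem_filter.2 ⟨hHE he, hef⟩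
  obtain ⟨e₀, he₀, -⟩ := not_subset.1 hHnot
  have hHcons : 0 < (consOf H).card := card_pos.2 ⟨e₀.1, mem_consOf.2 ⟨e₀, he₀, rfl⟩⟩
  have hUE : Hf ∪ H ⊆ E := union_subset (hHf ▸ filter_subset _ E) hHE
  have hUne : (Hf ∪ H).Nonempty := ⟨e₀, mem_union_right _ he₀⟩
  have hUtau : IsTau τ (Hf ∪ H) := (isTau_of_forall_fst_eq hA hdeg).union hHclosed.1
  have hUcard : (consOf (Hf ∪ H)).card ≤ 2 * SMALL := by
    rw [consOf_union_s18]
    linarith [card_union_le (consOf Hf) (consOf H), card_consOf_le_one hA]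
  have hUleaves : leaves (Hf ∪ H) ⊆ vbls Hf :=
    leaves_union_subset.trans (union_subset Subset.rfl hHclosed.2)
  refine ⟨hUne.ne_empty, hUtau, hUcard, ?_, hUleaves, ?_⟩
  · by_contra hL
    exact hUne.ne_empty <| hPA.eq_empty_of_leaves_eq_empty hζ0 hUE hUtau hUcard
      (not_nonempty_iff_eq_empty.1 hL)
  · obtain ⟨v₀, hv₀, hv₀'⟩ : ∃ v ∈ vbls Hf, v ∉ leaves (Hf ∪ H) := by
      by_contra! hstar
      exact hHnot <| subset_of_vbls_subset_leaves_union hA hHA hPA hζ0 hHE hHclosed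
        (by omega) hstar
    exact revenue_union_le hA hHA hv₀ hv₀' hUleaves

/-- If `H` is a small `S`-closed τ-subgraph not contained in `H_f` (the star of the
constraint `f`, whose neighborhood is `S = N(f)`), then `H_f ∪ H` is a nonempty
τ-subgraph with at most `2·SMALL` constraints, having at least one leaf, all leaves
adjacent to `f`, and revenue at most `τ − 1`. -/
theorem stmt_18 {Cn Vr : Type*} [Fintype Cn] [Fintype Vr] [DecidableEq Cn] [DecidableEq Vr]
    (τ SMALL K : ℕ) (hτ : 3 ≤ τ) (hSMALL : 1 ≤ SMALL)
    (ζ : ℝ) (hζ0 : 0 < ζ) (hζ1 : ζ < 1)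
    (E : Finset (Cn × Vr)) (hPA : PlausibilityAssumption τ ζ SMALL E)
    (f : Cn) (Hf : Finset (Cn × Vr)) (hHf : Hf = E.filter fun e => e.1 = f)
    (S : Finset Vr) (hSdef : S = vbls Hf) (hSK : S.card ≤ K)
    (hdeg : τ ≤ Hf.card)
    (H : Finset (Cn × Vr)) (hHE : H ⊆ E) (hHtau : IsTau τ H)
    (hHsmall : (consOf H).card ≤ SMALL) (hHclosed : SClosed τ S H)
    (hHnot : ¬ H ⊆ Hf) :
    Hf ∪ H ≠ ∅ ∧ IsTau τ (Hf ∪ H) ∧ (consOf (Hf ∪ H)).card ≤ 2 * SMALL ∧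
      (leaves (Hf ∪ H)).Nonempty ∧ leaves (Hf ∪ H) ⊆ S ∧
      revenue τ (Hf ∪ H) ≤ (τ : ℝ) - 1 :=
  stmt_18_general τ SMALL ζ hζ0 E hPA f Hf hHf S hSdef hdeg H hHE hHsmall hHclosed hHnot
end
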